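/- arXiv:2006.03224 — 4 statements merged into one kernel-verified Lean document; each statement's English description precedes it below -/
import Mathlib

section
/- Convergence of incremental PnP-ADMM (IPA). Let n, b ≥ 1 and γ > 0. Let g_1,…,g_b : ℝ^n → ℝ be convex and Lipschitz continuous with constants L_1,…,L_b; set L := max{L_1,…,L_b} and g := (1/b)·Σ_{i=1}^b g_i. Let D : ℝ^n → ℝ^n be a map whose residual I − D is firmly nonexpansive, let G := prox_{γg} and G_i := prox_{γ g_i}, and define S(v) := D(v) − G(2·D(v) − v). Assume there exists v* ∈ ℝ^n with S(v*) = 0, and set x* := D(v*). Let (i_k)_{k≥1} be independent random indices, each uniformly distributed on {1,…,b}, and from deterministic initial points x^0, s^0 ∈ ℝ^n define the random sequences z^k := G_{i_k}(x^{k−1} + s^{k−1}), x^k := D(z^k − s^{k−1}), s^k := s^{k−1} + x^k − z^k, and v^k := z^k − s^{k−1}, for k ≥ 1. Assume there is a constant R < ∞ such that ‖x^k − x*‖ ≤ R almost surely for all k ≥ 0. Then for every t ≥ 1, E[(1/t)·Σ_{k=1}^t ‖S(v^k)‖²] ≤ (R + 2γL)²/t + max{γ, γ²}·(4LR + 12L²).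 -/
open MeasureTheory ProbabilityTheory
open scoped RealInnerProductSpace

/-- Euclidean space ℝ^n. -/
abbrev En (n : ℕ) := EuclideanSpace ℝ (Fin n)

/-- `G` is the proximal operator `prox_{γf}`: for every `z`, `G z` minimizes
`x ↦ (1/2)‖x − z‖² + γ f x` over `ℝ^n`. -/
def IsProx {n : ℕ} (γ : ℝ) (f : En n → ℝ) (G : En n → En n) : Prop :=
  ∀ z x : En n,
    (1 / 2 : ℝ) * ‖G z - z‖ ^ 2 + γ * f (G z) ≤ (1 / 2 : ℝ) * ‖x - z‖ ^ 2 + γ * f x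

/-- A map `S : ℝ^n → ℝ^n` is firmly nonexpansive if
`⟨S x − S y, x − y⟩ ≥ ‖S x − S y‖²` for all `x, y`. -/
def FirmlyNonexpansive {n : ℕ} (S : En n → En n) : Prop :=
  ∀ x y : En n, ‖S x - S y‖ ^ 2 ≤ ⟪S x - S y, x - y⟫

/-!
Since `I - D` and `G = prox_{γg}` are firmly nonexpansive, so is the Douglas–Rachford residual
`S = D - G ∘ (2D - I)`, and `S v* = 0` gives `‖S u‖² + ‖u - S u - v*‖² ≤ ‖u - v*‖²`.
Eliminating `x` and `s`, IPA reads `v^{k+1} = v^k - S v^k + e_k` with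
`e_k = (G_{i_{k+1}} - I) w - (G - I) w` for `w = 2D v^k - v^k`; a prox of a convex `L`-Lipschitz
function moves points by at most `γL`, so `‖e_k‖ ≤ 2γL`, and also `‖v^k - v*‖ ≤ R + 2γL`.
Hence each step loses `‖S v^k‖²` up to an error `4γLR + 12γ²L²`, and telescoping gives the
bound for every sample path, hence in expectation.
-/

open Filter Topology Finset

lemma nonneg_of_forall_Ioc_nonneg_add_mul {a c : ℝ} (h : ∀ t ∈ Set.Ioc (0 : ℝ) 1, 0 ≤ a + t * c) :
    0 ≤ a := by
  have hlim : Tendsto (fun t : ℝ => a + t * c) (𝓝[>] 0) (𝓝 a) := by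
    have : Continuous (fun t : ℝ => a + t * c) := by fun_prop
    simpa using (this.tendsto 0).mono_left nhdsWithin_le_nhds
  exact ge_of_tendsto hlim (mem_of_superset (Ioc_mem_nhdsGT one_pos) h)

section Prox

variable {n : ℕ} {γ : ℝ} {f : En n → ℝ} {G : En n → En n}

lemma IsProx.inner_sub_le (hγ : 0 ≤ γ) (hf : ConvexOn ℝ Set.univ f) (hG : IsProx γ f G)
    (z x : En n) : ⟪z - G z, x - G z⟫ ≤ γ * (f x - f (G z)) := by
  set d := x - G z
  -- Compare `G z` with `G z + t • d`, divide by `t` and let `t → 0⁺`.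
  rw [← neg_sub, inner_neg_left, neg_le_iff_add_nonneg]
  refine nonneg_of_forall_Ioc_nonneg_add_mul (c := ‖d‖ ^ 2 / 2) fun t ht => ?_
  obtain ⟨ht0, ht1⟩ := ht
  have hconv : f (G z + t • d) ≤ (1 - t) * f (G z) + t * f x := by
    have hcomb : (1 - t) • G z + t • x = G z + t • d := by simp only [d]; module
    simpa only [hcomb, smul_eq_mul] using hf.2 (Set.mem_univ (G z)) (Set.mem_univ x)
      (show 0 ≤ 1 - t by linarith) ht0.le (sub_add_cancel 1 t)
  have hmin := hG z (G z + t • d)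
  have hexp : ‖G z + t • d - z‖ ^ 2 = ‖G z - z‖ ^ 2 + 2 * t * ⟪G z - z, d⟫ + t ^ 2 * ‖d‖ ^ 2 := by
    rw [show G z + t • d - z = (G z - z) + t • d by abel, norm_add_sq_real, inner_smul_right,
      norm_smul, mul_pow, Real.norm_eq_abs, sq_abs]
    ring
  have : 0 ≤ t * (γ * (f x - f (G z)) + ⟪G z - z, d⟫ + t * (‖d‖ ^ 2 / 2)) := by
    nlinarith [mul_le_mul_of_nonneg_left hconv hγ]
  exact nonneg_of_mul_nonneg_right this ht0

lemma IsProx.norm_sub_le (hγ : 0 ≤ γ) (hf : ConvexOn ℝ Set.univ f) (hG : IsProx γ f G)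
    {M : ℝ} (hM : 0 ≤ M) (hlip : ∀ x y, |f x - f y| ≤ M * ‖x - y‖) (z : En n) :
    ‖G z - z‖ ≤ γ * M := by
  have hvar := hG.inner_sub_le hγ hf z z
  rw [real_inner_self_eq_norm_sq, norm_sub_rev] at hvar
  have hdiff : f z - f (G z) ≤ M * ‖G z - z‖ :=
    (le_abs_self _).trans (norm_sub_rev (G z) z ▸ hlip z (G z))
  have : ‖G z - z‖ ^ 2 ≤ γ * M * ‖G z - z‖ := by
    nlinarith [mul_le_mul_of_nonneg_left hdiff hγ]
  nlinarith [norm_nonneg (G z - z), mul_nonneg hγ hM]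

lemma IsProx.firmlyNonexpansive (hγ : 0 ≤ γ) (hf : ConvexOn ℝ Set.univ f) (hG : IsProx γ f G) :
    FirmlyNonexpansive G := by
  intro z z'
  have h := hG.inner_sub_le hγ hf z (G z')
  have h' := hG.inner_sub_le hγ hf z' (G z)
  simp only [← real_inner_self_eq_norm_sq, inner_sub_left, inner_sub_right] at h h' ⊢
  linarith [real_inner_comm z (G z), real_inner_comm z (G z'), real_inner_comm z' (G z),
    real_inner_comm z' (G z'), real_inner_comm (G z) (G z')]

end Prox

lemma norm_sub_sq_le_inner_sub_of_le {E : Type*} [NormedAddCommGroup E] [InnerProductSpace ℝ E]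
    {p q d : E} (hp : ‖d - p‖ ^ 2 ≤ ⟪d - p, d⟫) (hq : ‖q‖ ^ 2 ≤ ⟪q, (2 : ℝ) • p - d⟫) :
    ‖p - q‖ ^ 2 ≤ ⟪p - q, d⟫ := by
  simp only [← real_inner_self_eq_norm_sq, inner_sub_left, inner_sub_right,
    real_inner_smul_right] at hp hq ⊢
  linarith [real_inner_comm p q, real_inner_comm p d, real_inner_comm q d]

section FirmlyNonexpansive

variable {n : ℕ}

lemma FirmlyNonexpansive.sub_comp_two_smul_sub {D G : En n → En n}
    (hD : FirmlyNonexpansive (fun x => x - D x)) (hG : FirmlyNonexpansive G) :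
    FirmlyNonexpansive (fun v => D v - G ((2 : ℝ) • D v - v)) := by
  intro a c
  have hDac := hD a c
  have hGac := hG ((2 : ℝ) • D a - a) ((2 : ℝ) • D c - c)
  rw [show a - D a - (c - D c) = (a - c) - (D a - D c) by abel] at hDac
  rw [show (2 : ℝ) • D a - a - ((2 : ℝ) • D c - c) = (2 : ℝ) • (D a - D c) - (a - c) by module]
    at hGac
  rw [show D a - G ((2 : ℝ) • D a - a) - (D c - G ((2 : ℝ) • D c - c))
    = (D a - D c) - (G ((2 : ℝ) • D a - a) - G ((2 : ℝ) • D c - c)) by abel]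
  exact norm_sub_sq_le_inner_sub_of_le hDac hGac

variable {S : En n → En n} {vstar : En n}

lemma FirmlyNonexpansive.norm_sub_sub_sq_le (hS : FirmlyNonexpansive S) (h0 : S vstar = 0)
    (u : En n) : ‖u - vstar - S u‖ ^ 2 ≤ ‖u - vstar‖ ^ 2 - ‖S u‖ ^ 2 := by
  have h := hS u vstar
  rw [h0, sub_zero] at h
  rw [norm_sub_sq_real, real_inner_comm]
  linarith

lemma FirmlyNonexpansive.norm_sq_add_norm_sub_sq_le (hS : FirmlyNonexpansive S) (h0 : S vstar = 0)
    {u u' : En n} {ε B : ℝ} (hε : 0 ≤ ε) (hu : ‖u - vstar‖ ≤ B)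
    (he : ‖u' - (u - S u)‖ ≤ ε) :
    ‖S u‖ ^ 2 + ‖u' - vstar‖ ^ 2 ≤ ‖u - vstar‖ ^ 2 + (2 * ε * B + ε ^ 2) := by
  have hdesc := hS.norm_sub_sub_sq_le h0 u
  have hle : ‖u - vstar - S u‖ ≤ B := by
    refine (pow_le_pow_iff_left₀ (norm_nonneg _) (norm_nonneg _) two_ne_zero).1 ?_ |>.trans hu
    nlinarith [sq_nonneg ‖S u‖]
  have htri : ‖u' - vstar‖ ≤ ‖u - vstar - S u‖ + ε :=
    calc ‖u' - vstar‖ = ‖(u - vstar - S u) + (u' - (u - S u))‖ := by congr 1; abel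
      _ ≤ ‖u - vstar - S u‖ + ε := (norm_add_le _ _).trans (by linarith)
  nlinarith [pow_le_pow_left₀ (norm_nonneg _) htri 2, norm_nonneg (u - vstar - S u)]

end FirmlyNonexpansive

lemma sum_Icc_le_of_le_add {a d : ℕ → ℝ} {c : ℝ} (hd : ∀ k, 0 ≤ d k)
    (h : ∀ k, 1 ≤ k → a k + d (k + 1) ≤ d k + c) (t : ℕ) :
    ∑ k ∈ Icc 1 t, a k ≤ d 1 + t * c := by
  suffices ∑ k ∈ Icc 1 t, a k + d (t + 1) ≤ d 1 + t * c by linarith [hd (t + 1)]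
  induction t with
  | zero => simp
  | succ t ih =>
    rw [sum_Icc_succ_top (by omega)]
    push_cast
    linarith [h (t + 1) (by omega)]

lemma nonneg_of_abs_sub_le_mul_norm {E : Type*} [NormedAddCommGroup E] [Nontrivial E]
    {f : E → ℝ} {K : ℝ} (hf : ∀ x y, |f x - f y| ≤ K * ‖x - y‖) : 0 ≤ K := by
  obtain ⟨x, hx⟩ := exists_ne (0 : E)
  have h := (abs_nonneg _).trans (hf x 0)
  rw [sub_zero] at h
  exact nonneg_of_mul_nonneg_left h (norm_pos_iff.2 hx)

section Average

variable {E ι : Type*} [Fintype ι] {g : ι → E → ℝ}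

lemma convexOn_const_mul_sum [AddCommGroup E] [Module ℝ E] (hg : ∀ i, ConvexOn ℝ Set.univ (g i))
    {c : ℝ} (hc : 0 ≤ c) : ConvexOn ℝ Set.univ (fun x => c * ∑ i, g i x) := by
  have hsum : ConvexOn ℝ Set.univ (∑ i, g i) :=
    sum_induction _ (ConvexOn ℝ Set.univ) (fun _ _ => ConvexOn.add)
      (convexOn_const 0 convex_univ) fun i _ => hg i
  simpa only [Finset.sum_apply, smul_eq_mul] using hsum.smul hc

lemma abs_average_sub_le [SeminormedAddCommGroup E] {K : ℝ} (hK : 0 ≤ K)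
    (hg : ∀ i x y, |g i x - g i y| ≤ K * ‖x - y‖) (x y : E) :
    |(1 / (Fintype.card ι : ℝ)) * ∑ i, g i x - (1 / (Fintype.card ι : ℝ)) * ∑ i, g i y|
      ≤ K * ‖x - y‖ := by
  rw [← mul_sub, ← sum_sub_distrib, abs_mul, abs_of_nonneg (by positivity)]
  calc (1 / (Fintype.card ι : ℝ)) * |∑ i, (g i x - g i y)|
      ≤ (1 / (Fintype.card ι : ℝ)) * ∑ _i : ι, K * ‖x - y‖ := by
        gcongr
        exact (abs_sum_le_sum_abs _ _).trans (sum_le_sum fun i _ => hg i x y)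
    _ = (Fintype.card ι / Fintype.card ι : ℝ) * (K * ‖x - y‖) := by
        rw [sum_const, card_univ, nsmul_eq_mul]; ring
    _ ≤ K * ‖x - y‖ := mul_le_of_le_one_left (by positivity) (div_self_le_one _)

end Average

lemma one_div_mul_add_mul_le (a : ℝ) {c : ℝ} (hc : 0 ≤ c) (t : ℝ) :
    1 / t * (a + t * c) ≤ a / t + c := by
  have := mul_le_of_le_one_left hc (div_self_le_one t)
  calc 1 / t * (a + t * c) = a / t + t / t * c := by ring
    _ ≤ a / t + c := by linarith

lemma mul_add_sq_mul_le_max_mul {γ p q : ℝ} (hp : 0 ≤ p) (hq : 0 ≤ q) :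
    γ * p + γ ^ 2 * q ≤ max γ (γ ^ 2) * (p + q) := by
  rw [mul_add]
  gcongr
  exacts [le_max_left _ _, le_max_right _ _]

lemma integral_le_of_nonneg_of_ae_le {Ω : Type*} [MeasurableSpace Ω] {μ : Measure Ω}
    [IsProbabilityMeasure μ] {f : Ω → ℝ} {c : ℝ} (hf : 0 ≤ᵐ[μ] f) (hfc : ∀ᵐ ω ∂μ, f ω ≤ c) :
    ∫ ω, f ω ∂μ ≤ c :=
  (integral_mono_of_nonneg hf (integrable_const c) hfc).trans_eq (by simp)

namespace IPA

variable {n : ℕ} {ι : Type*}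

def IsTrajectory (D : En n → En n) (Gi : ι → En n → En n) (idx : ℕ → ι) (x z s v : ℕ → En n) :
    Prop :=
  ∀ k, 1 ≤ k → z k = Gi (idx k) (x (k - 1) + s (k - 1)) ∧ x k = D (z k - s (k - 1)) ∧
    s k = s (k - 1) + x k - z k ∧ v k = z k - s (k - 1)

variable {D G S : En n → En n} {Gi : ι → En n → En n} {idx : ℕ → ι} {x z s v : ℕ → En n}
  {vstar : En n} {δ R : ℝ}

lemma IsTrajectory.norm_v_sub_le (h : IsTrajectory D Gi idx x z s v)
    (hGi : ∀ j w, ‖Gi j w - w‖ ≤ δ) (hstar : ‖D vstar - vstar‖ ≤ δ)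
    (hR : ∀ k, ‖x k - D vstar‖ ≤ R) {k : ℕ} (hk : 1 ≤ k) :
    ‖v k - vstar‖ ≤ R + 2 * δ := by
  obtain ⟨hz, -, -, hv⟩ := h k hk
  calc ‖v k - vstar‖
      = ‖(z k - (x (k - 1) + s (k - 1))) + (x (k - 1) - D vstar) + (D vstar - vstar)‖ := by
        rw [hv]; congr 1; abel
    _ ≤ ‖z k - (x (k - 1) + s (k - 1))‖ + ‖x (k - 1) - D vstar‖ + ‖D vstar - vstar‖ :=
        norm_add₃_le
    _ ≤ δ + R + δ := by
        gcongr
        · rw [hz]; exact hGi _ _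
        · exact hR _
    _ = R + 2 * δ := by ring

lemma IsTrajectory.norm_v_succ_sub_le (h : IsTrajectory D Gi idx x z s v)
    (hS : ∀ u, S u = D u - G ((2 : ℝ) • D u - u))
    (hG : ∀ w, ‖G w - w‖ ≤ δ) (hGi : ∀ j w, ‖Gi j w - w‖ ≤ δ) {k : ℕ} (hk : 1 ≤ k) :
    ‖v (k + 1) - (v k - S (v k))‖ ≤ 2 * δ := by
  obtain ⟨-, hx, hs, hv⟩ := h k hk
  obtain ⟨hz', -, -, hv'⟩ := h (k + 1) (by omega)
  have hxk : x k = D (v k) := by rw [hx, hv]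
  have hsk : s k = D (v k) - v k := by rw [hs, hxk, hv]; abel
  set w := (2 : ℝ) • D (v k) - v k
  have hw : x k + s k = w := by rw [hxk, hsk]; module
  calc ‖v (k + 1) - (v k - S (v k))‖ = ‖(Gi (idx (k + 1)) w - w) - (G w - w)‖ := by
        rw [hv', hz', Nat.add_sub_cancel, hw, hS, hsk]
        congr 1; module
    _ ≤ ‖Gi (idx (k + 1)) w - w‖ + ‖G w - w‖ := norm_sub_le _ _
    _ ≤ 2 * δ := by linarith [hGi (idx (k + 1)) w, hG w]

lemma IsTrajectory.sum_norm_sq_le (h : IsTrajectory D Gi idx x z s v)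
    (hS : ∀ u, S u = D u - G ((2 : ℝ) • D u - u)) (hSfirm : FirmlyNonexpansive S)
    (hS0 : S vstar = 0) (hG : ∀ w, ‖G w - w‖ ≤ δ) (hGi : ∀ j w, ‖Gi j w - w‖ ≤ δ)
    (hR : ∀ k, ‖x k - D vstar‖ ≤ R) (t : ℕ) :
    ∑ k ∈ Icc 1 t, ‖S (v k)‖ ^ 2 ≤ (R + 2 * δ) ^ 2 + t * (4 * δ * R + 12 * δ ^ 2) := by
  have hδ : 0 ≤ δ := (norm_nonneg _).trans (hG 0)
  have hstar : ‖D vstar - vstar‖ ≤ δ := by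
    have hfix : G ((2 : ℝ) • D vstar - vstar) = D vstar := by
      rw [hS, sub_eq_zero] at hS0; exact hS0.symm
    have hdiff : D vstar - vstar = ((2 : ℝ) • D vstar - vstar) - G ((2 : ℝ) • D vstar - vstar) := by
      rw [hfix]; module
    rw [hdiff, norm_sub_rev]
    exact hG _
  have hvB : ∀ k, 1 ≤ k → ‖v k - vstar‖ ≤ R + 2 * δ := fun k hk =>
    h.norm_v_sub_le hGi hstar hR hk
  calc ∑ k ∈ Icc 1 t, ‖S (v k)‖ ^ 2
      ≤ ‖v 1 - vstar‖ ^ 2 + t * (2 * (2 * δ) * (R + 2 * δ) + (2 * δ) ^ 2) :=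
        sum_Icc_le_of_le_add (d := fun k => ‖v k - vstar‖ ^ 2) (fun _ => sq_nonneg _)
          (fun k hk => hSfirm.norm_sq_add_norm_sub_sq_le hS0 (by positivity) (hvB k hk)
            (h.norm_v_succ_sub_le hS hG hGi hk)) t
    _ ≤ (R + 2 * δ) ^ 2 + t * (4 * δ * R + 12 * δ ^ 2) := by
        have : ‖v 1 - vstar‖ ^ 2 ≤ (R + 2 * δ) ^ 2 := by gcongr; exact hvB 1 le_rfl
        linarith

lemma IsTrajectory.one_div_mul_sum_norm_sq_le {γ L : ℝ} (h : IsTrajectory D Gi idx x z s v)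
    (hγ : 0 ≤ γ) (hL : 0 ≤ L)
    (hS : ∀ u, S u = D u - G ((2 : ℝ) • D u - u)) (hSfirm : FirmlyNonexpansive S)
    (hS0 : S vstar = 0) (hG : ∀ w, ‖G w - w‖ ≤ γ * L) (hGi : ∀ j w, ‖Gi j w - w‖ ≤ γ * L)
    (hR : ∀ k, ‖x k - D vstar‖ ≤ R) (t : ℕ) :
    1 / (t : ℝ) * ∑ k ∈ Icc 1 t, ‖S (v k)‖ ^ 2
      ≤ (R + 2 * γ * L) ^ 2 / t + max γ (γ ^ 2) * (4 * L * R + 12 * L ^ 2) := by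
  have hR0 : 0 ≤ R := (norm_nonneg _).trans (hR 0)
  calc 1 / (t : ℝ) * ∑ k ∈ Icc 1 t, ‖S (v k)‖ ^ 2
      ≤ 1 / t * ((R + 2 * γ * L) ^ 2 + t * (γ * (4 * L * R) + γ ^ 2 * (12 * L ^ 2))) := by
        gcongr
        linarith [h.sum_norm_sq_le hS hSfirm hS0 hG hGi hR t]
    _ ≤ (R + 2 * γ * L) ^ 2 / t + (γ * (4 * L * R) + γ ^ 2 * (12 * L ^ 2)) :=
        one_div_mul_add_mul_le _ (by positivity) _
    _ ≤ (R + 2 * γ * L) ^ 2 / t + max γ (γ ^ 2) * (4 * L * R + 12 * L ^ 2) := by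
        gcongr
        exact mul_add_sq_mul_le_max_mul (by positivity) (by positivity)

end IPA

theorem ipa_convergence_general {n b : ℕ} (hn : 1 ≤ n)
    (γ : ℝ) (hγ : 0 < γ)
    (g : Fin b → En n → ℝ)
    (hconv : ∀ i, ConvexOn ℝ Set.univ (g i))
    (Lc : Fin b → ℝ)
    (hlip : ∀ i, ∀ x y : En n, |g i x - g i y| ≤ Lc i * ‖x - y‖)
    (L : ℝ) (hL : L = ⨆ i, Lc i)
    (D : En n → En n) (hD : FirmlyNonexpansive (fun x : En n => x - D x))
    (G : En n → En n) (hG : IsProx γ (fun x => (1 / (b : ℝ)) * ∑ i, g i x) G)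
    (Gi : Fin b → En n → En n) (hGi : ∀ i, IsProx γ (g i) (Gi i))
    (S : En n → En n) (hS : ∀ v : En n, S v = D v - G ((2 : ℝ) • D v - v))
    (vstar : En n) (hvstar : S vstar = 0)
    (xstar : En n) (hxstar : xstar = D vstar)
    (Ω : Type*) [MeasurableSpace Ω] (μ : Measure Ω) [IsProbabilityMeasure μ]
    (idx : ℕ → Ω → Fin b)
    (x z s v : ℕ → Ω → En n)
    (hz : ∀ k : ℕ, 1 ≤ k → ∀ ω, z k ω = Gi (idx k ω) (x (k - 1) ω + s (k - 1) ω))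
    (hx : ∀ k : ℕ, 1 ≤ k → ∀ ω, x k ω = D (z k ω - s (k - 1) ω))
    (hs : ∀ k : ℕ, 1 ≤ k → ∀ ω, s k ω = s (k - 1) ω + x k ω - z k ω)
    (hv : ∀ k : ℕ, 1 ≤ k → ∀ ω, v k ω = z k ω - s (k - 1) ω)
    (R : ℝ) (hR : ∀ k : ℕ, ∀ᵐ ω ∂μ, ‖x k ω - xstar‖ ≤ R)
    (t : ℕ) :
    ∫ ω, (1 / (t : ℝ)) * ∑ k ∈ Finset.Icc 1 t, ‖S (v k ω)‖ ^ 2 ∂μ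
      ≤ (R + 2 * γ * L) ^ 2 / (t : ℝ) + max γ (γ ^ 2) * (4 * L * R + 12 * L ^ 2) := by
  subst hxstar
  have : NeZero n := ⟨by omega⟩
  have hLcL : ∀ i, Lc i ≤ L := fun i => hL ▸ le_ciSup (Set.finite_range Lc).bddAbove i
  have hL0 : 0 ≤ L := hL ▸ Real.iSup_nonneg fun i => nonneg_of_abs_sub_le_mul_norm (hlip i)
  have hlipL : ∀ i a c, |g i a - g i c| ≤ L * ‖a - c‖ := fun i a c =>
    (hlip i a c).trans (by gcongr; exact hLcL i)
  have hgconv := convexOn_const_mul_sum hconv (c := 1 / (b : ℝ)) (by positivity)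
  have hGdisp : ∀ w, ‖G w - w‖ ≤ γ * L := hG.norm_sub_le hγ.le hgconv hL0 fun a c => by
    simpa using abs_average_sub_le hL0 hlipL a c
  have hGidisp : ∀ i w, ‖Gi i w - w‖ ≤ γ * L := fun i =>
    (hGi i).norm_sub_le hγ.le (hconv i) hL0 (hlipL i)
  have hSfirm : FirmlyNonexpansive S :=
    funext hS ▸ hD.sub_comp_two_smul_sub (hG.firmlyNonexpansive hγ.le hgconv)
  refine integral_le_of_nonneg_of_ae_le (ae_of_all _ fun ω => by positivity) ?_
  filter_upwards [ae_all_iff.2 hR] with ω hω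
  exact IPA.IsTrajectory.one_div_mul_sum_norm_sq_le
    (fun k hk => ⟨hz k hk ω, hx k hk ω, hs k hk ω, hv k hk ω⟩)
    hγ.le hL0 hS hSfirm hvstar hGdisp hGidisp hω t

/-- Convergence of incremental PnP-ADMM (IPA). -/
theorem ipa_convergence {n b : ℕ} (hn : 1 ≤ n) (hb : 1 ≤ b)
    (γ : ℝ) (hγ : 0 < γ)
    (g : Fin b → En n → ℝ)
    (hconv : ∀ i, ConvexOn ℝ Set.univ (g i))
    (Lc : Fin b → ℝ)
    (hlip : ∀ i, ∀ x y : En n, |g i x - g i y| ≤ Lc i * ‖x - y‖)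
    (L : ℝ) (hL : L = ⨆ i, Lc i)
    (D : En n → En n) (hD : FirmlyNonexpansive (fun x : En n => x - D x))
    (G : En n → En n) (hG : IsProx γ (fun x => (1 / (b : ℝ)) * ∑ i, g i x) G)
    (Gi : Fin b → En n → En n) (hGi : ∀ i, IsProx γ (g i) (Gi i))
    (S : En n → En n) (hS : ∀ v : En n, S v = D v - G ((2 : ℝ) • D v - v))
    (vstar : En n) (hvstar : S vstar = 0)
    (xstar : En n) (hxstar : xstar = D vstar)
    (Ω : Type*) [MeasurableSpace Ω] (μ : Measure Ω) [IsProbabilityMeasure μ]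
    (idx : ℕ → Ω → Fin b)
    (hmeas : ∀ k, Measurable (idx k))
    (hindep : iIndepFun idx μ)
    (hunif : ∀ (k : ℕ) (i : Fin b), μ {ω | idx k ω = i} = 1 / (b : ENNReal))
    (x0 s0 : En n)
    (x z s v : ℕ → Ω → En n)
    (hx0 : ∀ ω, x 0 ω = x0) (hs0 : ∀ ω, s 0 ω = s0)
    (hz : ∀ k : ℕ, 1 ≤ k → ∀ ω, z k ω = Gi (idx k ω) (x (k - 1) ω + s (k - 1) ω))
    (hx : ∀ k : ℕ, 1 ≤ k → ∀ ω, x k ω = D (z k ω - s (k - 1) ω))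
    (hs : ∀ k : ℕ, 1 ≤ k → ∀ ω, s k ω = s (k - 1) ω + x k ω - z k ω)
    (hv : ∀ k : ℕ, 1 ≤ k → ∀ ω, v k ω = z k ω - s (k - 1) ω)
    (R : ℝ) (hR : ∀ k : ℕ, ∀ᵐ ω ∂μ, ‖x k ω - xstar‖ ≤ R)
    (t : ℕ) (ht : 1 ≤ t) :
    ∫ ω, (1 / (t : ℝ)) * ∑ k ∈ Finset.Icc 1 t, ‖S (v k ω)‖ ^ 2 ∂μ
      ≤ (R + 2 * γ * L) ^ 2 / (t : ℝ) + max γ (γ ^ 2) * (4 * L * R + 12 * L ^ 2) :=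
  ipa_convergence_general hn γ hγ g hconv Lc hlip L hL D hD G hG Gi hGi S hS vstar hvstar xstar
    hxstar Ω μ idx x z s v hz hx hs hv R hR t
end

section
/- Linear convergence of IPA under contractivity. Let n, b ≥ 1, γ > 0, and let g_1,…,g_b : ℝ^n → ℝ be convex and Lipschitz continuous with constants L_1,…,L_b; set L := max{L_1,…,L_b} and g := (1/b)·Σ_{i=1}^b g_i. Let D : ℝ^n → ℝ^n be a map whose residual I − D is Lipschitz continuous with constant ε for some 0 < ε < 1 (so D is Lipschitz with constant 1 + ε ≤ 2). Let G := prox_{γg}, G_i := prox_{γ g_i}, and S(v) := D(v) − G(2·D(v) − v). Assume that I − S is a contraction with constant η ∈ (0, 1), that there exists v* ∈ ℝ^n with S(v*) = 0 (set x* := D(v*)), and that the sequences defined from initial points x^0, s^0 ∈ ℝ^n and any choice of indices i_k ∈ {1,…,b} by z^k := G_{i_k}(x^{k−1} + s^{k−1}), x^k := D(z^k − s^{k−1}), s^k := s^{k−1} + x^k − z^k, v^k := z^k − s^{k−1} satisfy ‖x^k − x*‖ ≤ R for all k ≥ 0 for some constant R < ∞. Then for every k ≥ 1, ‖x^k − x*‖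 ≤ η^{k−1}·(2R + 4γL) + 4γL/(1 − η). -/
set_option maxHeartbeats 1000000

open scoped RealInnerProductSpace

lemma prox_displacement {n : ℕ} {γ K : ℝ} (hγ : 0 < γ) (hK : 0 ≤ K)
    {f : En n → ℝ} (hf : ∀ x y : En n, |f x - f y| ≤ K * ‖x - y‖)
    {P : En n → En n} (hP : IsProx γ f P) (z : En n) : ‖P z - z‖ ≤ γ * K := by
  set d := ‖P z - z‖ with hd
  have hd0 : 0 ≤ d := norm_nonneg _
  have key : ∀ t : ℝ, 0 < t → t ≤ 1 → d ^ 2 ≤ γ * K * d + t / 2 * d ^ 2 := by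
    intro t ht ht1
    have h := hP z (P z + t • (z - P z))
    have e1 : P z + t • (z - P z) - z = (1 - t) • (P z - z) := by module
    have e2 : ‖P z + t • (z - P z) - z‖ = (1 - t) * d := by
      rw [e1, norm_smul, Real.norm_eq_abs, abs_of_nonneg (by linarith)]
    have e3 : f (P z + t • (z - P z)) ≤ f (P z) + K * (t * d) := by
      have h4 := hf (P z + t • (z - P z)) (P z)
      have e5 : P z + t • (z - P z) - P z = t • (z - P z) := by module
      rw [e5, norm_smul, Real.norm_eq_abs, abs_of_pos ht, norm_sub_rev] at h4
      have := abs_le.mp h4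
      linarith [this.1, this.2]
    rw [e2] at h
    have h6 : (1/2 : ℝ) * d ^ 2 + γ * f (P z) ≤ (1/2) * ((1-t)*d)^2 + γ * (f (P z) + K * (t * d)) := by
      calc (1/2 : ℝ) * d ^ 2 + γ * f (P z) ≤ (1/2) * ((1-t)*d)^2 + γ * f (P z + t • (z - P z)) := h
        _ ≤ _ := by nlinarith [e3]
    nlinarith [h6, ht, sq_nonneg d]
  have h2 : d ^ 2 ≤ γ * K * d := by
    refine le_of_forall_pos_le_add ?_
    intro ε hε
    have hden : (0:ℝ) < d ^ 2 + 1 := by positivity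
    set t := min 1 (2 * ε / (d ^ 2 + 1)) with htdef
    have ht0 : 0 < t := lt_min one_pos (by positivity)
    have ht1 : t ≤ 1 := min_le_left _ _
    have h3 := key t ht0 ht1
    have h4 : t / 2 * d ^ 2 ≤ ε := by
      have ht2 : t ≤ 2 * ε / (d ^ 2 + 1) := min_le_right _ _
      rw [le_div_iff₀ hden] at ht2
      nlinarith [sq_nonneg d]
    linarith
  rcases hd0.eq_or_lt with h | h
  · rw [← h]; positivity
  · nlinarith [h2, h]

/-- Linear convergence of IPA under contractivity. -/
theorem ipa_linear_convergence {n b : ℕ} (hn : 1 ≤ n) (hb : 1 ≤ b)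
    (γ : ℝ) (hγ : 0 < γ)
    (g : Fin b → En n → ℝ)
    (hconv : ∀ i, ConvexOn ℝ Set.univ (g i))
    (Lc : Fin b → ℝ)
    (hlip : ∀ i, ∀ x y : En n, |g i x - g i y| ≤ Lc i * ‖x - y‖)
    (L : ℝ) (hL : L = ⨆ i, Lc i)
    (D : En n → En n)
    (ε : ℝ) (hε0 : 0 < ε) (hε1 : ε < 1)
    (hDres : ∀ x y : En n, ‖(x - D x) - (y - D y)‖ ≤ ε * ‖x - y‖)
    (G : En n → En n) (hG : IsProx γ (fun x => (1 / (b : ℝ)) * ∑ i, g i x) G)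
    (Gi : Fin b → En n → En n) (hGi : ∀ i, IsProx γ (g i) (Gi i))
    (S : En n → En n) (hS : ∀ v : En n, S v = D v - G ((2 : ℝ) • D v - v))
    (η : ℝ) (hη0 : 0 < η) (hη1 : η < 1)
    (hcontr : ∀ u w : En n, ‖(u - S u) - (w - S w)‖ ≤ η * ‖u - w‖)
    (vstar : En n) (hvstar : S vstar = 0)
    (xstar : En n) (hxstar : xstar = D vstar)
    (idx : ℕ → Fin b)
    (x0 s0 : En n)
    (x z s v : ℕ → En n)
    (hx0 : x 0 = x0) (hs0 : s 0 = s0)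
    (hz : ∀ k : ℕ, 1 ≤ k → z k = Gi (idx k) (x (k - 1) + s (k - 1)))
    (hx : ∀ k : ℕ, 1 ≤ k → x k = D (z k - s (k - 1)))
    (hs : ∀ k : ℕ, 1 ≤ k → s k = s (k - 1) + x k - z k)
    (hv : ∀ k : ℕ, 1 ≤ k → v k = z k - s (k - 1))
    (R : ℝ) (hR : ∀ k : ℕ, ‖x k - xstar‖ ≤ R) :
    ∀ k : ℕ, 1 ≤ k →
      ‖x k - xstar‖ ≤ η ^ (k - 1) * (2 * R + 4 * γ * L) + 4 * γ * L / (1 - η) := by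
  -- Basic facts about the Lipschitz constants
  have hLc0 : ∀ i, 0 ≤ Lc i := by
    intro i
    have hpt : ‖(0 : En n) - EuclideanSpace.single (⟨0, hn⟩ : Fin n) (1:ℝ)‖ = 1 := by
      rw [zero_sub, norm_neg, EuclideanSpace.norm_single, norm_one]
    have h := hlip i 0 (EuclideanSpace.single (⟨0, hn⟩ : Fin n) (1:ℝ))
    rw [hpt, mul_one] at h
    exact le_trans (abs_nonneg _) h
  have hLub : ∀ i, Lc i ≤ L := by
    intro i
    rw [hL]
    exact le_ciSup (Set.finite_range Lc).bddAbove i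
  have hbpos : (0:ℝ) < (b:ℝ) := by exact_mod_cast hb
  have hL0 : 0 ≤ L := le_trans (hLc0 ⟨0, hb⟩) (hLub ⟨0, hb⟩)
  -- Lipschitz bound for the averaged function
  have havg : ∀ X Y : En n,
      |(fun x => (1 / (b : ℝ)) * ∑ i, g i x) X - (fun x => (1 / (b : ℝ)) * ∑ i, g i x) Y|
        ≤ L * ‖X - Y‖ := by
    intro X Y
    simp only
    rw [← mul_sub, abs_mul, abs_of_nonneg (by positivity : (0:ℝ) ≤ 1 / (b:ℝ)),
      ← Finset.sum_sub_distrib]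
    have h1 : |∑ i, (g i X - g i Y)| ≤ ∑ i : Fin b, (L * ‖X - Y‖) := by
      refine le_trans (Finset.abs_sum_le_sum_abs _ _) ?_
      refine Finset.sum_le_sum fun i _ => ?_
      exact le_trans (hlip i X Y) (mul_le_mul_of_nonneg_right (hLub i) (norm_nonneg _))
    rw [Finset.sum_const, Finset.card_univ, Fintype.card_fin, nsmul_eq_mul] at h1
    calc (1 / (b:ℝ)) * |∑ i, (g i X - g i Y)| ≤ (1/(b:ℝ)) * ((b:ℝ) * (L * ‖X - Y‖)) := by
          exact mul_le_mul_of_nonneg_left h1 (by positivity)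
      _ = L * ‖X - Y‖ := by field_simp
  -- Displacement bounds
  have hGdisp : ∀ w : En n, ‖G w - w‖ ≤ γ * L := fun w => prox_displacement hγ hL0 havg hG w
  have hGidisp : ∀ i (w : En n), ‖Gi i w - w‖ ≤ γ * L := by
    intro i w
    refine le_trans (prox_displacement hγ (hLc0 i) (hlip i) (hGi i) w) ?_
    exact mul_le_mul_of_nonneg_left (hLub i) hγ.le
  -- Structure of the iterates
  have hsx : ∀ k : ℕ, 1 ≤ k → s k = x k - v k := by
    intro k hk
    rw [hs k hk, hv k hk]; abel
  have hxD : ∀ k : ℕ, 1 ≤ k → x k = D (v k) := by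
    intro k hk
    rw [hx k hk, hv k hk]
  -- the fixed point
  have hGfix : G (xstar + (xstar - vstar)) = xstar := by
    have h0 := hS vstar
    rw [hvstar] at h0
    have h1 : G ((2:ℝ) • D vstar - vstar) = D vstar := by
      have := h0.symm
      rw [sub_eq_zero] at this
      exact this.symm
    have h2 : (2:ℝ) • D vstar - vstar = xstar + (xstar - vstar) := by
      rw [hxstar]; module
    rw [← h2, h1, ← hxstar]
  have hvstar_eq : vstar = G (xstar + (xstar - vstar)) - (xstar - vstar) := by
    rw [hGfix]; abel
  -- base case : ‖v 1 - vstar‖ ≤ R + 2γL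
  have hbase : ‖v 1 - vstar‖ ≤ R + 2 * (γ * L) := by
    have hv1 : v 1 = Gi (idx 1) (x 0 + s 0) - s 0 := by
      rw [hv 1 le_rfl, hz 1 le_rfl]
    set u : En n := x 0 + s 0 with hu
    set ust : En n := xstar + (xstar - vstar) with hust
    have hid : v 1 - vstar =
        (Gi (idx 1) u - u) - (G ust - ust) + (x 0 - xstar) := by
      rw [hv1, hvstar_eq, hu, hust]; module
    rw [hid]
    calc ‖(Gi (idx 1) u - u) - (G ust - ust) + (x 0 - xstar)‖
        ≤ ‖(Gi (idx 1) u - u) - (G ust - ust)‖ + ‖x 0 - xstar‖ := norm_add_le _ _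
      _ ≤ ‖Gi (idx 1) u - u‖ + ‖G ust - ust‖ + ‖x 0 - xstar‖ := by
          linarith [norm_sub_le (Gi (idx 1) u - u) (G ust - ust)]
      _ ≤ γ * L + γ * L + R := by
          have := hGidisp (idx 1) u
          have := hGdisp ust
          have := hR 0
          linarith
      _ = R + 2 * (γ * L) := by ring
  -- one-step recursion
  have hstep : ∀ k : ℕ, 1 ≤ k →
      ‖v (k+1) - vstar‖ ≤ η * ‖v k - vstar‖ + 2 * (γ * L) := by
    intro k hk
    have hk1 : 1 ≤ k + 1 := by omega
    have hv2 : v (k+1) = Gi (idx (k+1)) (x k + s k) - s k := by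
      rw [hv (k+1) hk1, hz (k+1) hk1]
      simp
    set w : En n := (2:ℝ) • D (v k) - v k with hw
    have hxs : x k + s k = w := by
      rw [hsx k hk, hxD k hk, hw]; module
    have hsk : s k = D (v k) - v k := by rw [hsx k hk, hxD k hk]
    have hid : v (k+1) - vstar =
        ((v k - S (v k)) - (vstar - S vstar)) + (Gi (idx (k+1)) w - G w) := by
      rw [hv2, hxs, hsk, hS (v k), hvstar]; module
    rw [hid]
    calc ‖((v k - S (v k)) - (vstar - S vstar)) + (Gi (idx (k+1)) w - G w)‖
        ≤ ‖(v k - S (v k)) - (vstar - S vstar)‖ + ‖Gi (idx (k+1)) w - G w‖ := norm_add_le _ _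
      _ ≤ η * ‖v k - vstar‖ + (‖Gi (idx (k+1)) w - w‖ + ‖G w - w‖) := by
          have h1 := hcontr (v k) vstar
          have h2 : ‖Gi (idx (k+1)) w - G w‖ ≤ ‖Gi (idx (k+1)) w - w‖ + ‖G w - w‖ := by
            have := norm_sub_le (Gi (idx (k+1)) w - w) (G w - w)
            have he : (Gi (idx (k+1)) w - w) - (G w - w) = Gi (idx (k+1)) w - G w := by abel
            rw [he] at this
            exact this
          linarith
      _ ≤ η * ‖v k - vstar‖ + 2 * (γ * L) := by
          have := hGidisp (idx (k+1)) w
          have := hGdisp w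
          linarith
  -- unrolled bound
  have hγL : 0 ≤ γ * L := by positivity
  have hη' : 0 < 1 - η := by linarith
  have hmain : ∀ m : ℕ, ‖v (m+1) - vstar‖ ≤ η ^ m * (R + 2 * (γ * L)) + 2 * (γ * L) / (1 - η) := by
    intro m
    induction m with
    | zero =>
        simp only [pow_zero, one_mul]
        have : 0 ≤ 2 * (γ * L) / (1 - η) := by positivity
        linarith [hbase]
    | succ m ih =>
        have h1 := hstep (m+1) (by omega)
        have h2 : η * ‖v (m+1) - vstar‖ ≤ η * (η ^ m * (R + 2 * (γ * L)) + 2 * (γ * L) / (1 - η)) :=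
          mul_le_mul_of_nonneg_left ih hη0.le
        have h3 : η * (2 * (γ * L) / (1 - η)) + 2 * (γ * L) = 2 * (γ * L) / (1 - η) := by
          field_simp
          ring
        calc ‖v (m+1+1) - vstar‖ ≤ η * ‖v (m+1) - vstar‖ + 2 * (γ * L) := h1
          _ ≤ η * (η ^ m * (R + 2 * (γ * L))) + (η * (2 * (γ * L) / (1 - η)) + 2 * (γ * L)) := by
              nlinarith [h2]
          _ = η ^ (m+1) * (R + 2 * (γ * L)) + 2 * (γ * L) / (1 - η) := by
              rw [h3]; ring
  -- conclusion
  intro k hk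
  obtain ⟨m, rfl⟩ : ∃ m, k = m + 1 := ⟨k - 1, by omega⟩
  simp only [Nat.add_sub_cancel]
  have ha := hmain m
  have hxeq : x (m+1) = D (v (m+1)) := hxD (m+1) (by omega)
  have hd := hDres (v (m+1)) vstar
  have hid : x (m+1) - xstar =
      (v (m+1) - vstar) - ((v (m+1) - D (v (m+1))) - (vstar - D vstar)) := by
    rw [hxeq, hxstar]; module
  have hb1 : ‖x (m+1) - xstar‖ ≤ ‖v (m+1) - vstar‖ + ε * ‖v (m+1) - vstar‖ := by
    rw [hid]
    refine le_trans (norm_sub_le _ _) ?_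
    linarith [hd]
  have hnn : 0 ≤ ‖v (m+1) - vstar‖ := norm_nonneg _
  have h2a : ‖x (m+1) - xstar‖ ≤ 2 * ‖v (m+1) - vstar‖ := by nlinarith
  have hfin : η ^ m * (2 * R + 4 * γ * L) + 4 * γ * L / (1 - η)
      = 2 * (η ^ m * (R + 2 * (γ * L)) + 2 * (γ * L) / (1 - η)) := by ring
  rw [hfin]
  linarith
end

section
/- Equivalence between PnP-ADMM and the Douglas–Rachford iteration. Let γ > 0, let g : ℝ^n → ℝ be convex with G := prox_{γg}, let D : ℝ^n → ℝ^n be any map, and define S(v) := D(v) − G(2·D(v) − v). From initial points x^0, s^0 ∈ ℝ^n define, for k ≥ 1, z^k := G(x^{k−1} + s^{k−1}), x^k := D(z^k − s^{k−1}), s^k := s^{k−1} + x^k − z^k, and set v^k := z^k − s^{k−1}. Then for every k ≥ 2: v^{k−1} = x^{k−1} − s^{k−1}, x^{k−1} = D(v^{k−1}), z^k = G(2·x^{k−1} − v^{k−1}), and v^k = v^{k−1} − S(v^{k−1}). -/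
open scoped RealInnerProductSpace

/-- Equivalence between PnP-ADMM and the Douglas–Rachford iteration. -/
theorem pnp_admm_dr_equivalence {n : ℕ}
    (γ : ℝ) (hγ : 0 < γ)
    (g : En n → ℝ) (hconv : ConvexOn ℝ Set.univ g)
    (G : En n → En n) (hG : IsProx γ g G)
    (D : En n → En n)
    (S : En n → En n) (hS : ∀ v : En n, S v = D v - G ((2 : ℝ) • D v - v))
    (x0 s0 : En n)
    (x z s v : ℕ → En n)
    (hx0 : x 0 = x0) (hs0 : s 0 = s0)
    (hz : ∀ k : ℕ, 1 ≤ k → z k = G (x (k - 1) + s (k - 1)))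
    (hx : ∀ k : ℕ, 1 ≤ k → x k = D (z k - s (k - 1)))
    (hs : ∀ k : ℕ, 1 ≤ k → s k = s (k - 1) + x k - z k)
    (hv : ∀ k : ℕ, 1 ≤ k → v k = z k - s (k - 1)) :
    ∀ k : ℕ, 2 ≤ k →
      v (k - 1) = x (k - 1) - s (k - 1) ∧
      x (k - 1) = D (v (k - 1)) ∧
      z k = G ((2 : ℝ) • x (k - 1) - v (k - 1)) ∧
      v k = v (k - 1) - S (v (k - 1)) := by
  intro k hk
  obtain ⟨m, rfl⟩ : ∃ m, k = m + 1 := ⟨k - 1, (Nat.succ_pred_eq_of_pos (by omega)).symm⟩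
  have hm : 1 ≤ m := by omega
  simp only [Nat.add_sub_cancel]
  have hvm := hv m hm
  have hsm := hs m hm
  have hxm := hx m hm
  have hzk := hz (m + 1) (by omega)
  have hvk := hv (m + 1) (by omega)
  simp only [Nat.add_sub_cancel] at hzk hvk
  have h1 : v m = x m - s m := by
    rw [hvm, hsm]; abel
  have h2 : x m = D (v m) := by rw [hxm, hvm]
  have h3 : z (m + 1) = G ((2 : ℝ) • x m - v m) := by
    rw [hzk, h1]
    congr 1
    rw [two_smul]; abel
  refine ⟨h1, h2, h3, ?_⟩
  rw [hvk, hS, ← h2, ← h3, h1]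
  abel
end

section
/- Proximal-average approximation error. Let n, b ≥ 1 and γ > 0. Let g_1,…,g_b : ℝ^n → ℝ be convex and Lipschitz continuous with constants L_1,…,L_b; set L := max{L_1,…,L_b} and g := (1/b)·Σ_{i=1}^b g_i. Then for every x ∈ ℝ^n, ‖prox_{γg}(x) − (1/b)·Σ_{i=1}^b prox_{γ g_i}(x)‖ ≤ 2γL. -/
open scoped RealInnerProductSpace

lemma prox_dist {n : ℕ} (γ M : ℝ) (hγ : 0 < γ) (hM : 0 ≤ M)
    (f : En n → ℝ) (hf : ∀ x y : En n, |f x - f y| ≤ M * ‖x - y‖)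
    (G : En n → En n) (hG : IsProx γ f G) (z : En n) :
    ‖G z - z‖ ≤ γ * M := by
  set d := ‖G z - z‖ with hd
  have hd0 : 0 ≤ d := norm_nonneg _
  have key : d ^ 2 ≤ γ * M * d := by
    apply le_of_forall_pos_le_add
    intro ε hε
    set t := min 1 (2 * ε / (d ^ 2 + 1)) with ht
    have hdp : (0:ℝ) < d ^ 2 + 1 := by positivity
    have ht0 : 0 < t := lt_min one_pos (by positivity)
    have ht1 : t ≤ 1 := min_le_left _ _
    have hG1 := hG z (G z + t • (z - G z))
    have hx : G z + t • (z - G z) - z = (1 - t) • (G z - z) := by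
      module
    have hnx : ‖G z + t • (z - G z) - z‖ = (1 - t) * d := by
      rw [hx, norm_smul, Real.norm_eq_abs, abs_of_nonneg (by linarith)]
    have hfx : f (G z + t • (z - G z)) - f (G z) ≤ M * (t * d) := by
      calc f (G z + t • (z - G z)) - f (G z) ≤ |f (G z + t • (z - G z)) - f (G z)| := le_abs_self _
        _ ≤ M * ‖G z + t • (z - G z) - G z‖ := hf _ _
        _ = M * (t * d) := by
            rw [add_sub_cancel_left, norm_smul, Real.norm_eq_abs, abs_of_pos ht0,
              norm_sub_rev]
    rw [hnx, ← hd] at hG1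
    have hfx' := mul_le_mul_of_nonneg_left hfx hγ.le
    have h1 : (1/2:ℝ) * d ^ 2 ≤ (1/2) * ((1 - t) * d) ^ 2 + γ * (M * (t * d)) := by
      nlinarith [hG1, hfx']
    -- ⇒ (1 - t/2) d² ≤ γ M d, i.e. d² ≤ γMd + (t/2)d²
    have h2 : d ^ 2 ≤ γ * M * d + (t / 2) * d ^ 2 := by nlinarith
    have h3 : (t / 2) * d ^ 2 ≤ ε := by
      have : t ≤ 2 * ε / (d ^ 2 + 1) := min_le_right _ _
      rw [le_div_iff₀ hdp] at this
      nlinarith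
    linarith
  rcases eq_or_lt_of_le hd0 with h | h
  · rw [← h]; positivity
  · nlinarith

/-- Proximal-average approximation error. -/
theorem proximal_average_error {n b : ℕ} (hn : 1 ≤ n) (hb : 1 ≤ b)
    (γ : ℝ) (hγ : 0 < γ)
    (g : Fin b → En n → ℝ)
    (hconv : ∀ i, ConvexOn ℝ Set.univ (g i))
    (Lc : Fin b → ℝ)
    (hlip : ∀ i, ∀ x y : En n, |g i x - g i y| ≤ Lc i * ‖x - y‖)
    (L : ℝ) (hL : L = ⨆ i, Lc i)
    (G : En n → En n) (hG : IsProx γ (fun x => (1 / (b : ℝ)) * ∑ i, g i x) G)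
    (Gi : Fin b → En n → En n) (hGi : ∀ i, IsProx γ (g i) (Gi i)) :
    ∀ x : En n, ‖G x - (1 / (b : ℝ)) • ∑ i, Gi i x‖ ≤ 2 * γ * L := by
  intro x
  haveI : NeZero b := ⟨by omega⟩
  have hb0 : (0:ℝ) < (b:ℝ) := by positivity
  -- each Lc i is nonneg
  have hLc0 : ∀ i, 0 ≤ Lc i := by
    intro i
    have e : En n := EuclideanSpace.single ⟨0, hn⟩ (1:ℝ)
    have hne : ‖(EuclideanSpace.single ⟨0, hn⟩ (1:ℝ) : En n) - 0‖ = 1 := by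
      simp [EuclideanSpace.norm_single]
    have h := hlip i (EuclideanSpace.single ⟨0, hn⟩ (1:ℝ)) 0
    rw [hne, mul_one] at h
    exact le_trans (abs_nonneg _) h
  have hLcL : ∀ i, Lc i ≤ L := by
    intro i
    rw [hL]
    exact le_ciSup (Set.Finite.bddAbove (Set.finite_range Lc)) i
  have hL0 : 0 ≤ L := le_trans (hLc0 ⟨0, hb⟩) (hLcL ⟨0, hb⟩)
  -- each g i is L-Lipschitz
  have hlipL : ∀ i, ∀ u v : En n, |g i u - g i v| ≤ L * ‖u - v‖ :=
    fun i u v => le_trans (hlip i u v)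
      (mul_le_mul_of_nonneg_right (hLcL i) (norm_nonneg _))
  -- g is L-Lipschitz
  have hglip : ∀ u v : En n,
      |(1 / (b : ℝ)) * ∑ i, g i u - (1 / (b : ℝ)) * ∑ i, g i v| ≤ L * ‖u - v‖ := by
    intro u v
    rw [← mul_sub, ← Finset.sum_sub_distrib, abs_mul, abs_of_pos (by positivity)]
    calc (1 / (b:ℝ)) * |∑ i, (g i u - g i v)|
        ≤ (1 / (b:ℝ)) * ∑ i, |g i u - g i v| := by
          apply mul_le_mul_of_nonneg_left (Finset.abs_sum_le_sum_abs _ _) (by positivity)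
      _ ≤ (1 / (b:ℝ)) * ∑ _i : Fin b, L * ‖u - v‖ := by
          apply mul_le_mul_of_nonneg_left (Finset.sum_le_sum fun i _ => hlipL i u v)
            (by positivity)
      _ = L * ‖u - v‖ := by
          simp [Finset.sum_const]
          field_simp
  have h1 : ‖G x - x‖ ≤ γ * L := prox_dist γ L hγ hL0 _ hglip G hG x
  have h2 : ∀ i, ‖Gi i x - x‖ ≤ γ * L :=
    fun i => prox_dist γ L hγ hL0 (g i) (hlipL i) (Gi i) (hGi i) x
  have h3 : ‖x - (1 / (b : ℝ)) • ∑ i, Gi i x‖ ≤ γ * L := by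
    have hx : x - (1 / (b : ℝ)) • ∑ i, Gi i x
        = (1 / (b : ℝ)) • ∑ i, (x - Gi i x) := by
      have hbx : (1 / (b : ℝ)) • ∑ _i : Fin b, x = x := by
        rw [Finset.sum_const, Finset.card_univ, Fintype.card_fin,
          ← Nat.cast_smul_eq_nsmul ℝ, smul_smul,
          show (1/(b:ℝ)) * (b:ℝ) = 1 by field_simp, one_smul]
      rw [Finset.sum_sub_distrib, smul_sub, hbx]
    rw [hx, norm_smul, Real.norm_eq_abs, abs_of_pos (by positivity)]
    calc (1 / (b:ℝ)) * ‖∑ i, (x - Gi i x)‖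
        ≤ (1 / (b:ℝ)) * ∑ i, ‖x - Gi i x‖ := by
          apply mul_le_mul_of_nonneg_left (norm_sum_le _ _) (by positivity)
      _ ≤ (1 / (b:ℝ)) * ∑ _i : Fin b, γ * L := by
          apply mul_le_mul_of_nonneg_left
            (Finset.sum_le_sum fun i _ => by rw [norm_sub_rev]; exact h2 i) (by positivity)
      _ = γ * L := by
          simp [Finset.sum_const]
          field_simp
  calc ‖G x - (1 / (b : ℝ)) • ∑ i, Gi i x‖
      ≤ ‖G x - x‖ + ‖x - (1 / (b : ℝ)) • ∑ i, Gi i x‖ := norm_sub_le_norm_sub_add_norm_sub _ _ _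
    _ ≤ γ * L + γ * L := add_le_add h1 h3
    _ = 2 * γ * L := by ring
end
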